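/- Let R be a commutative noetherian ring and let Fw denote the class of finitely weakly Laskerian R-modules. Then Fw satisfies condition C_a for every ideal a of R. -/

import Mathlib

universe u

open CategoryTheory Opposite

noncomputable section

variable (R : Type u) [CommRing R]

/-- A class of `R`-modules, modeled as a set of objects of `ModuleCat R`. -/
abbrev ModClass (R : Type u) [CommRing R] := Set (ModuleCat.{u} R)

/-- `S` is closed under isomorphisms of `R`-modules. -/
def IsoClosed (S : ModClass R) : Prop :=
  ∀ (M N : ModuleCat.{u} R), (↥M ≃ₗ[R] ↥N) → M ∈ S → N ∈ S

/-- `S` contains a zero module. -/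
def ContainsZero (S : ModClass R) : Prop :=
  ModuleCat.of R PUnit ∈ S

/-- The extension class `ST`: all modules possessing a submodule belonging to `S`
with quotient belonging to `T`. -/
def ExtCls (S T : ModClass R) : ModClass R :=
  {M | ∃ L : Submodule R ↥M, ModuleCat.of R L ∈ S ∧ ModuleCat.of R (↥M ⧸ L) ∈ T}

/-- `S` is closed under extensions. -/
def ClosedUnderExt (S : ModClass R) : Prop :=
  ∀ (M : ModuleCat.{u} R) (L : Submodule R ↥M),
    ModuleCat.of R L ∈ S → ModuleCat.of R (↥M ⧸ L) ∈ S → M ∈ S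

/-- `S` is closed under submodules. -/
def ClosedUnderSub (S : ModClass R) : Prop :=
  ∀ (M : ModuleCat.{u} R) (L : Submodule R ↥M), M ∈ S → ModuleCat.of R L ∈ S

/-- `S` is closed under quotient modules. -/
def ClosedUnderQuot (S : ModClass R) : Prop :=
  ∀ (M : ModuleCat.{u} R) (L : Submodule R ↥M), M ∈ S → ModuleCat.of R (↥M ⧸ L) ∈ S

/-- `S` is a Serre class: it is closed under isomorphisms, contains the zero module, and
is closed under submodules, quotient modules, and extensions. -/
structure IsSerre (S : ModClass R) : Prop where
  isoClosed : IsoClosed R S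
  zero_mem : ContainsZero R S
  sub : ClosedUnderSub R S
  quot : ClosedUnderQuot R S
  ext : ClosedUnderExt R S

/-- The class `N` of finitely generated `R`-modules. -/
def FGCls : ModClass R := {M | Module.Finite R ↥M}

/-- The class `F` of `R`-modules with finite support. -/
def FinSuppCls : ModClass R := {M | (Module.support R ↥M).Finite}

/-- The class of all quotients of members of `S`. -/
def QuotCls (S : ModClass R) : ModClass R :=
  {M | ∃ (X : ModuleCat.{u} R) (f : ↥X →ₗ[R] ↥M), X ∈ S ∧ Function.Surjective f}

/-- `Γ_a(M) = M`: every element of `M` is annihilated by some power of `a`. -/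
def IsTorsionCls (a : Ideal R) (M : Type u) [AddCommGroup M] [Module R M] : Prop :=
  ∀ x : M, ∃ n : ℕ, ∀ r ∈ a ^ n, r • x = 0

/-- The class `S` satisfies Melkersson's condition `C_a`: any module `M` with `Γ_a(M) = M`
and `(0 :_M a) ∈ S` belongs to `S`. -/
def SatisfiesC (a : Ideal R) (S : ModClass R) : Prop :=
  ∀ M : ModuleCat.{u} R, IsTorsionCls R a ↥M →
    ModuleCat.of R (Submodule.torsionBySet R ↥M (a : Set R)) ∈ S → M ∈ S

/-- A module is weakly Laskerian if every quotient has finitely many associated primes. -/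
def IsWeaklyLaskerian (M : Type u) [AddCommGroup M] [Module R M] : Prop :=
  ∀ K : Submodule R M, (associatedPrimes R (M ⧸ K)).Finite

/-- A module is finitely weakly Laskerian if the quotient by every finitely generated submodule
has finitely many associated primes. -/
def IsFWLaskerian (M : Type u) [AddCommGroup M] [Module R M] : Prop :=
  ∀ K : Submodule R M, K.FG → (associatedPrimes R (M ⧸ K)).Finite

/-- A module is minimax if it has a finitely generated submodule with artinian quotient. -/
def IsMinimax (M : Type u) [AddCommGroup M] [Module R M] : Prop :=
  ∃ N : Submodule R M, N.FG ∧ IsArtinian R (M ⧸ N)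

/-- The `a`-torsion submodule `Γ_a(M)` of a module `M`. -/
def torsionGamma (a : Ideal R) (M : Type u) [AddCommGroup M] [Module R M] : Submodule R M :=
  ⨆ n : ℕ, Submodule.torsionBySet R M ((a ^ n : Ideal R) : Set R)

/-- `Ext_R^i(R/a, M)` as an object of `ModuleCat R`. -/
def extQuot (a : Ideal R) (i : ℕ) (M : ModuleCat.{u} R) : ModuleCat.{u} R :=
  ((Ext R (ModuleCat.{u} R) i).obj (op (ModuleCat.of R (R ⧸ a)))).obj M

/-- A module `X` is `a`-cofinite if `Supp X ⊆ V(a)` and all modules `Ext_R^i(R/a, X)` are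
finitely generated. -/
def IsCofinite (a : Ideal R) (M : ModuleCat.{u} R) : Prop :=
  Module.support R ↥M ⊆ PrimeSpectrum.zeroLocus (a : Set R) ∧
    ∀ i : ℕ, Module.Finite R ↥(extQuot R a i M)

/-- The ideal `a` has height at least one: every prime containing `a` has height at least one. -/
def HeightGEOne (a : Ideal R) : Prop :=
  ∀ p : PrimeSpectrum R, a ≤ p.asIdeal → 1 ≤ Order.height p

end

/-! Since `M ⧸ K` is `a`-torsion, each of its associated primes contains `a`, hence is an
associated prime of `T = (0 :_{M/K} a)`. The natural map `(0 :_M a) → T` has finitely generated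
kernel `(0 :_M a) ∩ K`, so by hypothesis its image has finitely many associated primes; and its
cokernel is finitely generated, being a quotient of `C ⧸ (0 :_C a)` for `C = (K :_M a)`, which
embeds into `K ^ n` via `c ↦ (rᵢ • c)ᵢ` for generators `rᵢ` of `a`. -/

open Submodule

section

variable {R M P : Type*} [CommRing R] [AddCommGroup M] [Module R M] [AddCommGroup P] [Module R P]

theorem Submodule.CoFG.map_of_surjective {S : Submodule R M} (hS : S.CoFG) {g : M →ₗ[R] P}
    (hg : Function.Surjective g) : (S.map g).CoFG :=
  Module.Finite.of_surjective (S.mapQ _ g (le_comap_map g S)) (by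
    intro y
    obtain ⟨x, rfl⟩ := (S.map g).mkQ_surjective y
    obtain ⟨m, rfl⟩ := hg x
    exact ⟨S.mkQ m, rfl⟩)

theorem associatedPrimes_subset_union_quotKer_quotRange (f : M →ₗ[R] P) :
    associatedPrimes R P ⊆
      associatedPrimes R (M ⧸ LinearMap.ker f) ∪ associatedPrimes R (P ⧸ LinearMap.range f) := by
  rw [LinearEquiv.AssociatedPrimes.eq f.quotKerEquivRange]
  exact associatedPrimes.subset_union_of_exact (LinearMap.range f).injective_subtype
    (LinearMap.exact_subtype_mkQ _)

theorem torsionBySet_le_comap (g : M →ₗ[R] P) (s : Set R) :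
    torsionBySet R M s ≤ (torsionBySet R P s).comap g := fun x hx =>
  (mem_torsionBySet_iff _ _).mpr fun r => by
    rw [← map_smul, (mem_torsionBySet_iff _ _).mp hx r, map_zero]

def torsionBySetMap (g : M →ₗ[R] P) (s : Set R) : torsionBySet R M s →ₗ[R] torsionBySet R P s :=
  g.restrict (torsionBySet_le_comap g s)

theorem ker_torsionBySetMap_fg [IsNoetherianRing R] (s : Set R) {K : Submodule R M}
    (hK : K.FG) : (LinearMap.ker (torsionBySetMap K.mkQ s)).FG := by
  rw [torsionBySetMap, LinearMap.ker_restrict, ker_mkQ]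
  refine fg_of_fg_map_injective _ (injective_subtype _) ?_
  rw [map_comap_subtype]
  exact hK.of_le inf_le_right

theorem torsionBySet_cofg_of_smul_le [IsNoetherianRing R] {a : Ideal R} {K C : Submodule R M}
    (hK : K.FG) (hC : a • C ≤ K) : (torsionBySet R C a).CoFG := by
  obtain ⟨s, rfl⟩ : a.FG := IsNoetherian.noetherian a
  have : Module.Finite R K := Module.Finite.iff_fg.mpr hK
  let φ : C →ₗ[R] (s → K) := LinearMap.pi fun r =>
    ((r : R) • C.subtype).codRestrict K fun c => smul_le.mp hC r (subset_span r.2) c c.2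
  refine (CoFG.ker φ).of_le fun c hc => ?_
  rw [← torsionBySet_eq_torsionBySet_span, mem_torsionBySet_iff]
  intro r
  exact Subtype.ext (congrArg Subtype.val (congrFun hc r) :)

theorem range_torsionBySetMap_mkQ_cofg [IsNoetherianRing R] (a : Ideal R) {K : Submodule R M}
    (hK : K.FG) : (LinearMap.range (torsionBySetMap K.mkQ a)).CoFG := by
  set C := (torsionBySet R (M ⧸ K) a).comap K.mkQ
  have hC : a • C ≤ K := smul_le.mpr fun r hr c hc => by
    have := (mem_torsionBySet_iff _ _).mp hc ⟨r, hr⟩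
    rwa [← map_smul, mkQ_apply, Quotient.mk_eq_zero] at this
  let ψ : C →ₗ[R] torsionBySet R (M ⧸ K) a := K.mkQ.restrict fun _ h => h
  have hψ : Function.Surjective ψ := by
    rintro ⟨y, hy⟩
    obtain ⟨m, rfl⟩ := K.mkQ_surjective y
    exact ⟨⟨m, hy⟩, rfl⟩
  refine ((torsionBySet_cofg_of_smul_le hK hC).map_of_surjective hψ).of_le ?_
  rintro _ ⟨c, hc, rfl⟩
  refine ⟨⟨c, (mem_torsionBySet_iff _ _).mpr fun r => ?_⟩, rfl⟩
  exact congrArg Subtype.val ((mem_torsionBySet_iff _ _).mp hc r)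

end

section

variable {R M : Type u} [CommRing R] [AddCommGroup M] [Module R M] {a : Ideal R}

theorem IsTorsionCls.quotient (h : IsTorsionCls R a M) (K : Submodule R M) :
    IsTorsionCls R a (M ⧸ K) := by
  intro x
  obtain ⟨m, rfl⟩ := K.mkQ_surjective x
  obtain ⟨n, hn⟩ := h m
  exact ⟨n, fun r hr => by rw [← map_smul, hn r hr, map_zero]⟩

theorem associatedPrimes_subset_torsionBySet [IsNoetherianRing R] (h : IsTorsionCls R a M) :
    associatedPrimes R M ⊆ associatedPrimes R (torsionBySet R M a) := by
  intro p hp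
  obtain ⟨hprime, f, hf⟩ := (isAssociatedPrime_iff_exists_injective_linearMap p M).mp hp
  have ha : a ≤ p := by
    intro r hr
    obtain ⟨n, hn⟩ := h (f 1)
    have hpow : r ^ n • (1 : R ⧸ p) = 0 :=
      hf (by rw [map_smul, hn _ (Ideal.pow_mem_pow hr n), map_zero])
    rw [Algebra.smul_def, mul_one, Ideal.Quotient.algebraMap_eq,
      Ideal.Quotient.eq_zero_iff_mem] at hpow
    exact hprime.mem_of_pow_mem n hpow
  refine (isAssociatedPrime_iff_exists_injective_linearMap p _).mpr
    ⟨hprime, f.codRestrict _ fun x => (mem_torsionBySet_iff _ _).mpr fun r => ?_,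
      (LinearMap.injective_codRestrict_iff _).mpr hf⟩
  rw [← map_smul, Algebra.smul_def, Ideal.Quotient.algebraMap_eq,
    Ideal.Quotient.eq_zero_iff_mem.mpr (ha r.2), zero_mul, map_zero]

end

/-- The class of finitely weakly Laskerian modules satisfies `C_a` for
every ideal `a`. -/
theorem fwLaskerian_satisfiesC (R : Type u) [CommRing R] [IsNoetherianRing R] (a : Ideal R) :
    SatisfiesC R a {M : ModuleCat.{u} R | IsFWLaskerian R ↥M} := by
  intro M hM hN K hK
  have hcoker := range_torsionBySetMap_mkQ_cofg a hK
  exact ((hN _ (ker_torsionBySetMap_fg _ hK)).union (associatedPrimes.finite R _)).subset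
    ((associatedPrimes_subset_torsionBySet (hM.quotient K)).trans
      (associatedPrimes_subset_union_quotKer_quotRange _))
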